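/- Let 1 < p < ∞, let D ⊂ ℝⁿ be a bounded open set with Lipschitz boundary, and let ρ ∈ ℝⁿ be a unit vector. Define h_D(ρ) = sup_{x ∈ D} x·ρ. Then there exist constants C > 0 and τ₀ > 0 such that for all τ ≥ τ₀, ∫_D exp(−pτ(h_D(ρ) − x·ρ)) dx ≥ C τ^{−n}. -/

import Mathlib

open MeasureTheory RealInnerProductSpace Filter Topology

/-- A bounded open set has Lipschitz boundary if near each boundary point, after
choosing a unit direction `v`, the set is the open region above the graph of a
Lipschitz function of the component orthogonal to `v`. -/
def HasLipschitzBoundary {n : ℕ} (D : Set (EuclideanSpace ℝ (Fin n))) : Prop :=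
  ∀ x ∈ frontier D, ∃ (v : EuclideanSpace ℝ (Fin n)) (U : Set (EuclideanSpace ℝ (Fin n)))
    (g : EuclideanSpace ℝ (Fin n) → ℝ) (K : NNReal),
      ‖v‖ = 1 ∧ IsOpen U ∧ x ∈ U ∧ LipschitzWith K g ∧
      ∀ y ∈ U, (y ∈ D ↔ g (y - (⟪y, v⟫ : ℝ) • v) < ⟪y, v⟫)

/-- The support function `h_D(ρ) = sup_{x ∈ D} x·ρ` of a set `D ⊆ ℝⁿ`. -/
noncomputable def supportFn {n : ℕ} (D : Set (EuclideanSpace ℝ (Fin n)))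
    (ρ : EuclideanSpace ℝ (Fin n)) : ℝ :=
  sSup ((fun x => (⟪x, ρ⟫ : ℝ)) '' D)

/-! The functional `x ↦ ⟪x, ρ⟫` attains `h_D(ρ)` on `closure D` at a point `z`, which lies on the
boundary since `D` is open. Near `z`, `D` is the region above a `K`-Lipschitz graph in some unit
direction `v`, so for small `s > 0` the ball of radius `s / (K + 1)` around `z + s • v` lies in `D`
(an interior cone at `z`). For `s = 1 / τ` the integrand is at least `exp (-2p)` on that ball,
whose volume is a constant times `τ ^ (-n)`. -/

open Metric Set

theorem le_of_mem_closure_of_forall_lt {X α : Type*} [TopologicalSpace X] [LinearOrder α]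
    [TopologicalSpace α] [OrderClosedTopology α] {D U : Set X} {φ ψ : X → α}
    (hφ : Continuous φ) (hψ : Continuous ψ) (hU : IsOpen U) (hlt : ∀ y ∈ U ∩ D, φ y < ψ y)
    {z : X} (hzD : z ∈ closure D) (hzU : z ∈ U) : φ z ≤ ψ z :=
  closure_minimal (fun y hy => (hlt y hy).le) (isClosed_le hφ hψ) (hU.inter_closure ⟨hzU, hzD⟩)

theorem ball_add_smul_subset_ball {F : Type*} [SeminormedAddCommGroup F] [NormedSpace ℝ F]
    {v : F} (hv : ‖v‖ = 1) (z : F) {s δ : ℝ} (hs : 0 ≤ s) (hδ : δ ≤ 1) :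
    ball (z + s • v) (s * δ) ⊆ ball z (2 * s) :=
  ball_subset_ball' <| by
    rw [dist_self_add_left, norm_smul, hv, mul_one, Real.norm_of_nonneg hs]
    nlinarith

section InnerProductSpace

variable {E : Type*} [NormedAddCommGroup E] [InnerProductSpace ℝ E]

theorem norm_sub_inner_smul_le {v : E} (hv : ‖v‖ = 1) (u : E) : ‖u - ⟪u, v⟫ • v‖ ≤ ‖u‖ := by
  have hsq : ‖u - ⟪u, v⟫ • v‖ ^ 2 = ‖u‖ ^ 2 - ⟪u, v⟫ ^ 2 := by
    rw [norm_sub_sq_real, norm_smul, hv, real_inner_smul_right, Real.norm_eq_abs, mul_one, sq_abs]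
    ring
  exact pow_le_pow_iff_left₀ (norm_nonneg _) (norm_nonneg _) two_ne_zero |>.1
    (by nlinarith [sq_nonneg ⟪u, v⟫])

theorem LipschitzWith.lt_inner_of_mem_ball {g : E → ℝ} {K : NNReal} (hg : LipschitzWith K g)
    {v z x : E} (hv : ‖v‖ = 1) (hz : g (z - ⟪z, v⟫ • v) ≤ ⟪z, v⟫) {s : ℝ}
    (hx : x ∈ ball (z + s • v) (s * ((K : ℝ) + 1)⁻¹)) : g (x - ⟪x, v⟫ • v) < ⟪x, v⟫ := by
  set u := x - (z + s • v)
  have hu : (K + 1) * ‖u‖ < s := by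
    rwa [mem_ball, dist_eq_norm, ← div_eq_mul_inv, lt_div_iff₀' (by positivity)] at hx
  have hxu : x = z + s • v + u := by simp [u]
  have hinner : ⟪x, v⟫ = ⟪z, v⟫ + s + ⟪u, v⟫ := by
    rw [hxu]
    simp only [inner_add_left, real_inner_smul_left, real_inner_self_eq_norm_sq, hv]
    ring
  have hproj : x - ⟪x, v⟫ • v = (z - ⟪z, v⟫ • v) + (u - ⟪u, v⟫ • v) := by
    rw [hinner, hxu]
    module
  have hgx : g (x - ⟪x, v⟫ • v) ≤ g (z - ⟪z, v⟫ • v) + K * ‖u‖ := by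
    calc g (x - ⟪x, v⟫ • v) ≤ g (z - ⟪z, v⟫ • v) + K * ‖u - ⟪u, v⟫ • v‖ := by
          simpa [hproj, dist_eq_norm] using hg.le_add_mul (x - ⟪x, v⟫ • v) (z - ⟪z, v⟫ • v)
      _ ≤ g (z - ⟪z, v⟫ • v) + K * ‖u‖ := by gcongr; exact norm_sub_inner_smul_le hv u
  have huv : -‖u‖ ≤ ⟪u, v⟫ := by
    simpa [hv] using (abs_le.1 (abs_real_inner_le_norm u v)).1
  linarith

theorem mul_sub_inner_le_of_mem_ball {ρ z x : E} {h p τ : ℝ} (hρ : ‖ρ‖ = 1) (hz : h ≤ ⟪z, ρ⟫)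
    (hp : 0 ≤ p) (hτ : 0 < τ) (hx : x ∈ ball z (2 * τ⁻¹)) : p * τ * (h - ⟪x, ρ⟫) ≤ 2 * p := by
  have hzx : ⟪z, ρ⟫ - ⟪x, ρ⟫ < 2 * τ⁻¹ := by
    rw [← inner_sub_left]
    calc ⟪z - x, ρ⟫ ≤ ‖z - x‖ := by simpa [hρ] using real_inner_le_norm (z - x) ρ
      _ < 2 * τ⁻¹ := by rwa [← dist_eq_norm, dist_comm]
  calc p * τ * (h - ⟪x, ρ⟫) ≤ p * τ * (2 * τ⁻¹) := by gcongr; linarith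
    _ = 2 * p := by field_simp

end InnerProductSpace

theorem Measure.addHaar_real_ball_mul_of_pos {F : Type*} [NormedAddCommGroup F] [NormedSpace ℝ F]
    [MeasurableSpace F] [BorelSpace F] [FiniteDimensional ℝ F] (μ : Measure F) [μ.IsAddHaarMeasure]
    (x : F) {r : ℝ} (hr : 0 < r) (s : ℝ) :
    μ.real (ball x (r * s)) = r ^ Module.finrank ℝ F * μ.real (ball 0 s) := by
  rw [measureReal_def, Measure.addHaar_ball_mul_of_pos μ x hr, ENNReal.toReal_mul,
    ENNReal.toReal_ofReal (by positivity), measureReal_def]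

section EuclideanSpace

variable {n : ℕ} {D : Set (EuclideanSpace ℝ (Fin n))}

theorem exists_mem_frontier_supportFn_le_inner (hDo : IsOpen D) (hDb : Bornology.IsBounded D)
    (hDne : D.Nonempty) {ρ : EuclideanSpace ℝ (Fin n)} (hρ : ρ ≠ 0) :
    ∃ z ∈ frontier D, supportFn D ρ ≤ ⟪z, ρ⟫ := by
  obtain ⟨z, hzD, hzmax⟩ := hDb.isCompact_closure.exists_isMaxOn hDne.closure
    (by fun_prop : Continuous fun x : EuclideanSpace ℝ (Fin n) => ⟪x, ρ⟫).continuousOn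
  refine ⟨z, ⟨hzD, fun hz => ?_⟩, csSup_le (hDne.image _) ?_⟩
  · rw [hDo.interior_eq] at hz
    have hray : ∀ᶠ t : ℝ in 𝓝[>] 0, z + t • ρ ∈ D :=
      nhdsWithin_le_nhds <| (Continuous.tendsto' (by fun_prop) 0 z (by simp)).eventually
        (hDo.mem_nhds hz)
    obtain ⟨t, htD, ht⟩ := (hray.and self_mem_nhdsWithin).exists
    have hle : ⟪z + t • ρ, ρ⟫ ≤ ⟪z, ρ⟫ := hzmax (subset_closure htD)
    rw [inner_add_left, real_inner_smul_left, real_inner_self_eq_norm_sq] at hle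
    have hρ2 : 0 < ‖ρ‖ ^ 2 := by positivity
    nlinarith
  · rintro _ ⟨x, hx, rfl⟩
    exact hzmax (subset_closure hx)

theorem HasLipschitzBoundary.exists_ball_subset_along_ray (hD : HasLipschitzBoundary D)
    {z : EuclideanSpace ℝ (Fin n)} (hz : z ∈ frontier D) :
    ∃ v : EuclideanSpace ℝ (Fin n), ‖v‖ = 1 ∧ ∃ δ > 0, δ ≤ 1 ∧ ∃ r > 0,
      ∀ s, 0 < s → s ≤ r → ball (z + s • v) (s * δ) ⊆ D := by
  obtain ⟨v, U, g, K, hv, hU, hzU, hg, hDU⟩ := hD z hz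
  obtain ⟨r, hr, hrU⟩ := isOpen_iff.1 hU z hzU
  have hgz : g (z - ⟪z, v⟫ • v) ≤ ⟪z, v⟫ :=
    le_of_mem_closure_of_forall_lt (hg.continuous.comp (by fun_prop)) (by fun_prop) hU
      (fun y hy => (hDU y hy.1).1 hy.2) (frontier_subset_closure hz) hzU
  refine ⟨v, hv, ((K : ℝ) + 1)⁻¹, by positivity, inv_le_one_of_one_le₀ (by simp), r / 2, by positivity,
    fun s hs hsr x hx => ?_⟩
  have hxU : x ∈ U := hrU <| ball_subset_ball (by linarith) <|
    ball_add_smul_subset_ball hv z hs.le (inv_le_one_of_one_le₀ (by simp)) hx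
  exact (hDU x hxU).2 (hg.lt_inner_of_mem_ball hv hgz hx)

end EuclideanSpace

/-- Exponential concentration lower bound near the supporting hyperplane: for a bounded
open Lipschitz set `D` and a unit vector `ρ`,
`∫_D exp(−pτ(h_D(ρ) − x·ρ)) dx ≥ C τ^{−n}` for large `τ`. -/
theorem exp_concentration_lower_bound
    {n : ℕ} (p : ℝ) (hp : 1 < p)
    (D : Set (EuclideanSpace ℝ (Fin n))) (hDo : IsOpen D)
    (hDb : Bornology.IsBounded D) (hDne : D.Nonempty)
    (hDlip : HasLipschitzBoundary D)
    (ρ : EuclideanSpace ℝ (Fin n)) (hρ : ‖ρ‖ = 1) :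
    ∃ C > (0 : ℝ), ∃ τ₀ > (0 : ℝ), ∀ τ ≥ τ₀,
      C * τ ^ (-(n : ℝ)) ≤
        ∫ x in D, Real.exp (-(p * τ * (supportFn D ρ - ⟪x, ρ⟫))) := by
  have hρ0 : ρ ≠ 0 := by rintro rfl; simp at hρ
  obtain ⟨z, hzD, hhz⟩ := exists_mem_frontier_supportFn_le_inner hDo hDb hDne hρ0
  obtain ⟨v, hv, δ, hδ0, hδ1, r, hr, hball⟩ := hDlip.exists_ball_subset_along_ray hzD
  set ω := volume.real (ball (0 : EuclideanSpace ℝ (Fin n)) δ)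
  have hω : 0 < ω := ENNReal.toReal_pos (measure_ball_pos volume 0 hδ0).ne' measure_ball_lt_top.ne
  refine ⟨Real.exp (-(2 * p)) * ω, by positivity, r⁻¹, by positivity, fun τ hτ => ?_⟩
  have hτ0 : 0 < τ := (inv_pos.2 hr).trans_le hτ
  set B := ball (z + τ⁻¹ • v) (τ⁻¹ * δ)
  have hBD : B ⊆ D := hball τ⁻¹ (inv_pos.2 hτ0) (inv_le_of_inv_le₀ hr hτ)
  have hint : IntegrableOn (fun x => Real.exp (-(p * τ * (supportFn D ρ - ⟪x, ρ⟫)))) D :=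
    ((Continuous.locallyIntegrable (by fun_prop)).integrableOn_isCompact
      hDb.isCompact_closure).mono_set subset_closure
  calc Real.exp (-(2 * p)) * ω * τ ^ (-(n : ℝ))
      = Real.exp (-(2 * p)) * volume.real B := by
        rw [Measure.addHaar_real_ball_mul_of_pos _ _ (inv_pos.2 hτ0), finrank_euclideanSpace_fin,
          Real.rpow_neg hτ0.le, Real.rpow_natCast, inv_pow]
        ring
    _ ≤ ∫ x in B, Real.exp (-(p * τ * (supportFn D ρ - ⟪x, ρ⟫))) :=
      setIntegral_ge_of_const_le_real measurableSet_ball measure_ball_lt_top.ne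
        (fun x hx => Real.exp_le_exp.2 <| neg_le_neg <| mul_sub_inner_le_of_mem_ball hρ hhz
          (by linarith) hτ0 (ball_add_smul_subset_ball hv z (inv_pos.2 hτ0).le hδ1 hx))
        (hint.mono_set hBD)
    _ ≤ ∫ x in D, Real.exp (-(p * τ * (supportFn D ρ - ⟪x, ρ⟫))) :=
      setIntegral_mono_set hint (.of_forall fun _ => (Real.exp_pos _).le) hBD.eventuallyLE
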